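/- Let G be a finite simple graph with vertex set V, and for each vertex v let d_v denote its degree. Then the independence number α(G) satisfies α(G) ≥ ∑_{v ∈ V} 1/(1 + d_v). -/

import Mathlib

/-!
Greedy argument: take a vertex `v` of minimum degree, put it into the independent set and delete
its closed neighbourhood `N[v]`. Each of the `1 + d(v)` deleted vertices has degree at least `d(v)`,
so their weights `1 / (1 + d)` add up to at most `1`, while deleting vertices only lowers the
degrees, hence raises the weights, of the vertices that remain. Induction on the vertex set.
-/

open Finset

namespace SimpleGraph

variable {V : Type*} {G : SimpleGraph V}

theorem IsIndepSet.insert {s : Set V} {v : V} (hs : G.IsIndepSet s) (hv : ∀ u ∈ s, ¬G.Adj v u) :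
    G.IsIndepSet (insert v s) :=
  Set.pairwise_insert.mpr ⟨hs, fun u hu _ => ⟨hv u hu, fun h => hv u hu h.symm⟩⟩

variable (G) [DecidableRel G.Adj]

def degreeIn (A : Finset V) (v : V) : ℕ := #{u ∈ A | G.Adj v u}

noncomputable def caroWeiSum (A : Finset V) : ℝ := ∑ v ∈ A, 1 / (1 + G.degreeIn A v)

theorem caroWeiSum_univ [Fintype V] :
    G.caroWeiSum univ = ∑ v : V, (1 : ℝ) / (1 + G.degree v) := by
  simp only [caroWeiSum, degreeIn, degree, neighborFinset_eq_filter]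

variable {G}

theorem degreeIn_mono {A B : Finset V} (h : A ⊆ B) (v : V) : G.degreeIn A v ≤ G.degreeIn B v :=
  card_le_card (filter_subset_filter _ h)

theorem sum_le_caroWeiSum_of_subset {A B : Finset V} (h : B ⊆ A) :
    ∑ u ∈ B, (1 : ℝ) / (1 + G.degreeIn A u) ≤ G.caroWeiSum B :=
  sum_le_sum fun u _ => by gcongr; exact degreeIn_mono h u

variable [DecidableEq V]

variable (G) in
def closedNbhdIn (A : Finset V) (v : V) : Finset V := insert v {u ∈ A | G.Adj v u}

theorem card_closedNbhdIn (A : Finset V) (v : V) : #(G.closedNbhdIn A v) = G.degreeIn A v + 1 :=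
  card_insert_of_notMem fun h => G.loopless.irrefl v (mem_filter.mp h).2

variable (G) in
theorem closedNbhdIn_subset {A : Finset V} {v : V} (hv : v ∈ A) : G.closedNbhdIn A v ⊆ A :=
  insert_subset hv (filter_subset _ _)

theorem sum_closedNbhdIn_le_one {A : Finset V} {v : V} (hv : v ∈ A)
    (hmin : ∀ u ∈ A, G.degreeIn A v ≤ G.degreeIn A u) :
    ∑ u ∈ G.closedNbhdIn A v, (1 : ℝ) / (1 + G.degreeIn A u) ≤ 1 :=
  calc ∑ u ∈ G.closedNbhdIn A v, (1 : ℝ) / (1 + G.degreeIn A u)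
      ≤ ∑ _u ∈ G.closedNbhdIn A v, (1 : ℝ) / (1 + G.degreeIn A v) :=
        sum_le_sum fun u hu => by gcongr; exact hmin u (G.closedNbhdIn_subset hv hu)
    _ = 1 := by
        rw [sum_const, card_closedNbhdIn, nsmul_eq_mul]
        push_cast
        field_simp
        ring

theorem caroWeiSum_le_one_add_sdiff {A : Finset V} {v : V} (hv : v ∈ A)
    (hmin : ∀ u ∈ A, G.degreeIn A v ≤ G.degreeIn A u) :
    G.caroWeiSum A ≤ 1 + G.caroWeiSum (A \ G.closedNbhdIn A v) := by
  have hrest : ∑ u ∈ A \ G.closedNbhdIn A v, (1 : ℝ) / (1 + G.degreeIn A u)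
      ≤ G.caroWeiSum (A \ G.closedNbhdIn A v) := sum_le_caroWeiSum_of_subset sdiff_subset
  rw [caroWeiSum, ← sum_sdiff (G.closedNbhdIn_subset hv)]
  linarith [sum_closedNbhdIn_le_one hv hmin]

theorem not_adj_of_mem_sdiff_closedNbhdIn {A : Finset V} {u v : V}
    (hu : u ∈ A \ G.closedNbhdIn A v) : ¬G.Adj v u := fun hvu =>
  (mem_sdiff.mp hu).2 (mem_insert_of_mem (mem_filter.mpr ⟨(mem_sdiff.mp hu).1, hvu⟩))

variable (G) in
theorem exists_isIndepSet_caroWeiSum_le (A : Finset V) :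
    ∃ s ⊆ A, G.IsIndepSet (s : Set V) ∧ G.caroWeiSum A ≤ #s := by
  induction A using Finset.strongInduction with
  | H A ih =>
  rcases A.eq_empty_or_nonempty with rfl | hA
  · exact ⟨∅, empty_subset _, by simp, by simp [caroWeiSum]⟩
  obtain ⟨v, hv, hmin⟩ := A.exists_min_image (G.degreeIn A) hA
  have hvN : v ∈ G.closedNbhdIn A v := mem_insert_self _ _
  obtain ⟨s, hsA, hs, hsum⟩ := ih (A \ G.closedNbhdIn A v)
    (sdiff_ssubset (G.closedNbhdIn_subset hv) ⟨v, hvN⟩)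
  have hvs : v ∉ s := fun h => (mem_sdiff.mp (hsA h)).2 hvN
  refine ⟨insert v s, insert_subset hv (hsA.trans sdiff_subset), ?_, ?_⟩
  · rw [coe_insert]
    exact hs.insert fun u hu => not_adj_of_mem_sdiff_closedNbhdIn (hsA hu)
  · rw [card_insert_of_notMem hvs]
    push_cast
    linarith [caroWeiSum_le_one_add_sdiff hv hmin]

end SimpleGraph

/-- Caro-Wei bound: there is an independent set of size at least `∑_v 1/(1+deg v)`. -/
theorem caro_wei {V : Type*} [Fintype V] [DecidableEq V] (G : SimpleGraph V)
    [DecidableRel G.Adj] :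
    ∃ s : Finset V, (∀ u ∈ s, ∀ v ∈ s, ¬ G.Adj u v) ∧
      (∑ v : V, (1 : ℝ) / (1 + G.degree v)) ≤ s.card := by
  obtain ⟨s, -, hs, hsum⟩ := G.exists_isIndepSet_caroWeiSum_le univ
  exact ⟨s, fun u hu v hv huv => hs hu hv (G.ne_of_adj huv) huv, G.caroWeiSum_univ ▸ hsum⟩
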